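/- arXiv:2401.08323 — 2 statements merged into one kernel-verified Lean document; each statement's English description precedes it below -/
import Mathlib

section
/- Let $U$ be continuous, strictly increasing, $\delta>0$, and $Y$ strictly positive with $\mathbb{E}[|U(Y)|]<\infty$. With $C(Y,\delta,\beta)=\varphi_\beta(\eta(Y,\delta,\beta))$ for $\delta>1$ (where $\varphi_\beta(w)=U^{-1}(\frac{U(w)+\beta U(\delta w)}{1+\beta})$) and $C(Y,\delta,\beta)=\eta(Y,\delta,\beta)$ for $\delta\le1$: for $0<\beta_1<\beta_2$, we have $C(Y,\delta,\beta_1)\ge C(Y,\delta,\beta_2)$. -/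
/-!
Write `E = 𝔼[U(Y)]` and `D(c) = 𝔼[(c - U(Y))₊]`, so that `U(η) = E - β D(U(δη))`.
Since `D` is nondecreasing and nonnegative, a larger `β` forces a smaller `η`.
For `δ > 1`, substituting the defining equation of `η` gives
`U(C) = (E + β N) / (1 + β)` with `N = c - D(c) = 𝔼[min c U(Y)]` at `c = U(δη)`:
a weighted mean of `E` and `N ≤ E` whose weight on `N` grows with `β`, while `N` itself
is nondecreasing in `η`. Both effects lower `U(C)` as `β` increases.
-/

open MeasureTheory Set

section ExpectedShortfall

variable {Ω : Type*} [MeasurableSpace Ω] {μ : Measure Ω} {f : Ω → ℝ}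

lemma integrable_max_const_sub_zero [IsFiniteMeasure μ] (hf : Integrable f μ) (c : ℝ) :
    Integrable (fun ω => max (c - f ω) 0) μ :=
  ((integrable_const c).sub hf).pos_part

lemma integral_max_const_sub_zero_mono [IsFiniteMeasure μ] (hf : Integrable f μ) :
    Monotone fun c : ℝ => ∫ ω, max (c - f ω) 0 ∂μ := fun _ _ hc =>
  integral_mono (integrable_max_const_sub_zero hf _) (integrable_max_const_sub_zero hf _)
    fun _ => max_le_max (sub_le_sub_right hc _) le_rfl

lemma integral_min_const_eq_sub [IsProbabilityMeasure μ] (hf : Integrable f μ) (c : ℝ) :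
    ∫ ω, min c (f ω) ∂μ = c - ∫ ω, max (c - f ω) 0 ∂μ := by
  have hmin : ∀ ω, min c (f ω) = c - max (c - f ω) 0 := fun ω => by
    rw [← min_sub_sub_left, sub_sub_cancel, sub_zero, min_comm]
  simp_rw [hmin]
  rw [integral_sub (integrable_const c) (integrable_max_const_sub_zero hf c), integral_const,
    probReal_univ, one_smul]

lemma integral_min_const_mono [IsFiniteMeasure μ] (hf : Integrable f μ) :
    Monotone fun c : ℝ => ∫ ω, min c (f ω) ∂μ := fun _ _ hc =>
  integral_mono ((integrable_const _).inf hf) ((integrable_const _).inf hf)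
    fun _ => min_le_min hc le_rfl

lemma integral_min_const_le_integral [IsFiniteMeasure μ] (hf : Integrable f μ) (c : ℝ) :
    ∫ ω, min c (f ω) ∂μ ≤ ∫ ω, f ω ∂μ :=
  integral_mono ((integrable_const _).inf hf) hf fun _ => min_le_right _ _

end ExpectedShortfall

lemma add_mul_div_one_add_le {E N₁ N₂ β₁ β₂ : ℝ} (hβ₁ : 0 ≤ β₁) (hβ : β₁ ≤ β₂)
    (hN₂E : N₂ ≤ E) (hN : N₂ ≤ N₁) :
    (E + β₂ * N₂) / (1 + β₂) ≤ (E + β₁ * N₁) / (1 + β₁) := by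
  rw [div_le_div_iff₀ (by linarith) (by linarith)]
  nlinarith [mul_nonneg (sub_nonneg.mpr hβ) (sub_nonneg.mpr hN₂E),
    mul_nonneg (mul_nonneg hβ₁ (by linarith : (0 : ℝ) ≤ 1 + β₂)) (sub_nonneg.mpr hN)]

section GDA

variable {Ω : Type*} [MeasurableSpace Ω] {μ : Measure Ω} {U : ℝ → ℝ} {Y : Ω → ℝ} {δ : ℝ}

lemma gda_value_antitone_in_beta [IsFiniteMeasure μ] (hUm : StrictMonoOn U (Ioi 0))
    (hδ : 0 < δ) (hInt : Integrable (fun ω => U (Y ω)) μ)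
    {β₁ β₂ η₁ η₂ : ℝ} (hβ₁ : 0 ≤ β₁) (hβ : β₁ ≤ β₂) (hη₁pos : 0 < η₁) (hη₂pos : 0 < η₂)
    (hη₁ : U η₁ = (∫ ω, U (Y ω) ∂μ) - β₁ * ∫ ω, max (U (δ * η₁) - U (Y ω)) 0 ∂μ)
    (hη₂ : U η₂ = (∫ ω, U (Y ω) ∂μ) - β₂ * ∫ ω, max (U (δ * η₂) - U (Y ω)) 0 ∂μ) :
    η₂ ≤ η₁ := by
  by_contra! hlt
  have hUη : U η₁ < U η₂ := hUm hη₁pos hη₂pos hlt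
  have hD : ∫ ω, max (U (δ * η₁) - U (Y ω)) 0 ∂μ ≤ ∫ ω, max (U (δ * η₂) - U (Y ω)) 0 ∂μ :=
    integral_max_const_sub_zero_mono hInt <| hUm.monotoneOn
      (mul_pos hδ hη₁pos) (mul_pos hδ hη₂pos) (mul_le_mul_of_nonneg_left hlt.le hδ.le)
  have hD₂ : 0 ≤ ∫ ω, max (U (δ * η₂) - U (Y ω)) 0 ∂μ :=
    integral_nonneg fun _ => le_max_right _ _
  nlinarith [mul_le_mul_of_nonneg_left hD hβ₁]

lemma gda_add_mul_utility_eq [IsProbabilityMeasure μ] (hInt : Integrable (fun ω => U (Y ω)) μ)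
    {β η : ℝ} (hη : U η = (∫ ω, U (Y ω) ∂μ) - β * ∫ ω, max (U (δ * η) - U (Y ω)) 0 ∂μ) :
    U η + β * U (δ * η) = (∫ ω, U (Y ω) ∂μ) + β * ∫ ω, min (U (δ * η)) (U (Y ω)) ∂μ := by
  rw [integral_min_const_eq_sub hInt, hη]
  ring

end GDA

theorem gda_certainty_equivalent_antitone_in_beta_general
    {Ω : Type*} [MeasurableSpace Ω] (μ : Measure Ω) [IsProbabilityMeasure μ]
    (U : ℝ → ℝ) (hUm : StrictMonoOn U (Set.Ioi 0))
    (δ β₁ β₂ : ℝ) (hδ : 0 < δ) (hβ₁ : 0 < β₁) (hβ : β₁ < β₂)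
    (Y : Ω → ℝ)
    (hInt : Integrable (fun ω => U (Y ω)) μ)
    (η₁ η₂ C₁ C₂ : ℝ) (hη₁pos : 0 < η₁) (hη₂pos : 0 < η₂)
    (hC₁pos : 0 < C₁) (hC₂pos : 0 < C₂)
    (hη₁ : U η₁ = (∫ ω, U (Y ω) ∂μ) - β₁ * ∫ ω, max (U (δ * η₁) - U (Y ω)) 0 ∂μ)
    (hη₂ : U η₂ = (∫ ω, U (Y ω) ∂μ) - β₂ * ∫ ω, max (U (δ * η₂) - U (Y ω)) 0 ∂μ)
    (hC₁ : if δ ≤ 1 then C₁ = η₁ else U C₁ = (U η₁ + β₁ * U (δ * η₁)) / (1 + β₁))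
    (hC₂ : if δ ≤ 1 then C₂ = η₂ else U C₂ = (U η₂ + β₂ * U (δ * η₂)) / (1 + β₂)) :
    C₁ ≥ C₂ := by
  have hη : η₂ ≤ η₁ :=
    gda_value_antitone_in_beta hUm hδ hInt hβ₁.le hβ.le hη₁pos hη₂pos hη₁ hη₂
  split_ifs at hC₁ hC₂
  · rwa [hC₁, hC₂]
  · refine (hUm.le_iff_le hC₂pos hC₁pos).mp ?_
    rw [hC₁, hC₂, gda_add_mul_utility_eq hInt hη₁, gda_add_mul_utility_eq hInt hη₂]
    exact add_mul_div_one_add_le hβ₁.le hβ.le (integral_min_const_le_integral hInt _)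
      (integral_min_const_mono hInt <| hUm.monotoneOn (mul_pos hδ hη₂pos) (mul_pos hδ hη₁pos)
        (mul_le_mul_of_nonneg_left hη hδ.le))

/-- The GDA certainty equivalent is nonincreasing in the disappointment-aversion
parameter `β`, for every `δ > 0`. For `δ ≤ 1` the certainty equivalent is the GDA
value itself, while for `δ > 1` it is `φ_β(η)` with
`U(φ_β(w)) = (U(w) + β U(δ w)) / (1 + β)`. -/
theorem gda_certainty_equivalent_antitone_in_beta
    {Ω : Type*} [MeasurableSpace Ω] (μ : Measure Ω) [IsProbabilityMeasure μ]
    (U : ℝ → ℝ) (hUc : ContinuousOn U (Set.Ioi 0)) (hUm : StrictMonoOn U (Set.Ioi 0))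
    (δ β₁ β₂ : ℝ) (hδ : 0 < δ) (hβ₁ : 0 < β₁) (hβ : β₁ < β₂)
    (Y : Ω → ℝ) (hYmeas : Measurable Y) (hYpos : ∀ ω, 0 < Y ω)
    (hInt : Integrable (fun ω => U (Y ω)) μ)
    (η₁ η₂ C₁ C₂ : ℝ) (hη₁pos : 0 < η₁) (hη₂pos : 0 < η₂)
    (hC₁pos : 0 < C₁) (hC₂pos : 0 < C₂)
    (hη₁ : U η₁ = (∫ ω, U (Y ω) ∂μ) - β₁ * ∫ ω, max (U (δ * η₁) - U (Y ω)) 0 ∂μ)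
    (hη₂ : U η₂ = (∫ ω, U (Y ω) ∂μ) - β₂ * ∫ ω, max (U (δ * η₂) - U (Y ω)) 0 ∂μ)
    (hC₁ : if δ ≤ 1 then C₁ = η₁ else U C₁ = (U η₁ + β₁ * U (δ * η₁)) / (1 + β₁))
    (hC₂ : if δ ≤ 1 then C₂ = η₂ else U C₂ = (U η₂ + β₂ * U (δ * η₂)) / (1 + β₂)) :
    C₁ ≥ C₂ :=
  gda_certainty_equivalent_antitone_in_beta_general μ U hUm δ β₁ β₂ hδ hβ₁ hβ Y hInt η₁ η₂ C₁ C₂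
    hη₁pos hη₂pos hC₁pos hC₂pos hη₁ hη₂ hC₁ hC₂
end

section
/- Let $U\in C^1((0,\infty))$ be concave with $U'>0$, let $\xi$ be standard normal, $x>0$, $y\in\mathbb{R}$, and $H\in\mathbb{R}$. Then $\mathbb{E}\big[U'(e^{x\xi+y-x^2/2})\,e^{x\xi+y-x^2/2}\,\mathbf{1}_{\{\xi<H/x\}}\,(\xi-x)\big]\le -\,U'(e^{H+y-x^2/2})\,e^{H+y-x^2/2}\,N'(H/x)<0$, where $N'$ is the standard normal density. (Suitable integrability is assumed, e.g. $U'(w)\le C(w^\nu+w^{-\nu})$.) -/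
open MeasureTheory ProbabilityTheory

/-- The standard normal density. -/
noncomputable def stdNormalPDF (x : ℝ) : ℝ := gaussianPDFReal 0 1 x

/-! Write `E z = exp (x z + y - x² / 2)`, `b = H / x`, `φ` for the standard normal density and
`γ` for its law. The integrand is `ψ z * w z` with `ψ = U' ∘ E`, antitone by concavity, and
`w z = E z * (z - x)`, which changes sign at `z = x`. Since `-(E φ)' = E (z - x) φ`, we get
`∫_{z<b} w dγ = -E b φ b`. Comparing `ψ` with its value at `min x b` on each side of the sign
change gives `∫_{z<b} ψ w dγ ≤ ψ (min x b) ∫_{z<b} w dγ ≤ -ψ b E b φ b`.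
The growth bound on `U'` makes `ψ w` Gaussian integrable. -/

open Real Set
open scoped NNReal

lemma ConcaveOn.antitoneOn_of_hasDerivAt {S : Set ℝ} {f f' : ℝ → ℝ} (hf : ConcaveOn ℝ S f)
    (hderiv : ∀ w ∈ S, HasDerivAt f (f' w) w) : AntitoneOn f' S := by
  intro a ha b hb hab
  rw [← (hderiv a ha).deriv, ← (hderiv b hb).deriv]
  exact hf.antitoneOn_deriv (fun w hw ↦ (hderiv w hw).differentiableAt) ha hb hab

lemma setIntegral_Iio_mul_le_of_antitone {μ : Measure ℝ} {ψ w : ℝ → ℝ} (hψ : Antitone ψ)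
    {x b : ℝ} (hw_neg : ∀ z < x, w z ≤ 0) (hw_pos : ∀ z, x ≤ z → 0 ≤ w z)
    (hψw : IntegrableOn (fun z ↦ ψ z * w z) (Iio b) μ) (hw : IntegrableOn w (Iio b) μ) :
    ∫ z in Iio b, ψ z * w z ∂μ ≤ ψ (min x b) * ∫ z in Iio b, w z ∂μ := by
  rw [← integral_const_mul]
  refine setIntegral_mono_on hψw (hw.const_mul _) measurableSet_Iio fun z hz ↦ ?_
  rcases lt_or_ge z x with hzx | hxz
  · exact mul_le_mul_of_nonpos_right (hψ (le_min hzx.le (le_of_lt hz))) (hw_neg z hzx)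
  · exact mul_le_mul_of_nonneg_right (hψ (min_le_left x b |>.trans hxz)) (hw_pos z hxz)

section GaussianIntegrals

variable {μ : ℝ} {v : ℝ≥0}

lemma setIntegral_gaussianReal_eq_setIntegral_smul {E : Type*} [NormedAddCommGroup E]
    [NormedSpace ℝ E] (hv : v ≠ 0) (f : ℝ → E) {s : Set ℝ} (hs : MeasurableSet s) :
    ∫ z in s, f z ∂gaussianReal μ v = ∫ z in s, gaussianPDFReal μ v z • f z := by
  rw [gaussianReal_of_var_ne_zero _ hv, setIntegral_withDensity_eq_setIntegral_toReal_smul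
    (measurable_gaussianPDF _ _) (ae_of_all _ fun _ ↦ gaussianPDF_lt_top) f hs]
  simp

lemma integrable_gaussianReal_iff {E : Type*} [NormedAddCommGroup E] [NormedSpace ℝ E]
    (hv : v ≠ 0) {f : ℝ → E} :
    Integrable f (gaussianReal μ v) ↔ Integrable (fun z ↦ gaussianPDFReal μ v z • f z) := by
  rw [gaussianReal_of_var_ne_zero _ hv, integrable_withDensity_iff_integrable_smul'
    (measurable_gaussianPDF _ _) (ae_of_all _ fun _ ↦ gaussianPDF_lt_top)]
  simp

lemma integrable_exp_mul_add_mul_sub_gaussianReal (a c x : ℝ) :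
    Integrable (fun z ↦ exp (a * z + c) * (z - x)) (gaussianReal μ v) := by
  have hmoment : Integrable (fun z ↦ z ^ 1 * exp (a * z)) (gaussianReal μ v) :=
    integrable_pow_mul_exp_of_integrable_exp_mul one_ne_zero
      (integrable_exp_mul_gaussianReal _) (integrable_exp_mul_gaussianReal _) 1
  refine ((hmoment.sub ((integrable_exp_mul_gaussianReal a).const_mul x)).const_mul (exp c)).congr
    (ae_of_all _ fun z ↦ ?_)
  simp only [Pi.sub_apply, pow_one, exp_add]
  ring

lemma integrable_comp_exp_mul_sub_gaussianReal {g : ℝ → ℝ} {C p q : ℝ}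
    (hg : ∀ w, 0 < w → |g w| ≤ C * (w ^ p + w ^ q)) {a c : ℝ}
    (hmeas : AEStronglyMeasurable (fun z ↦ g (exp (a * z + c))) (gaussianReal μ v)) (x : ℝ) :
    Integrable (fun z ↦ g (exp (a * z + c)) * (z - x)) (gaussianReal μ v) := by
  have hdom : Integrable (fun z ↦ C * (‖exp (p * a * z + p * c) * (z - x)‖
      + ‖exp (q * a * z + q * c) * (z - x)‖)) (gaussianReal μ v) :=
    ((integrable_exp_mul_add_mul_sub_gaussianReal _ _ x).norm.add
      (integrable_exp_mul_add_mul_sub_gaussianReal _ _ x).norm).const_mul C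
  refine hdom.mono' (hmeas.mul (by fun_prop)) (ae_of_all _ fun z ↦ ?_)
  have hrpow : ∀ r : ℝ, exp (a * z + c) ^ r = exp (r * a * z + r * c) := fun r ↦ by
    rw [← exp_mul]
    ring_nf
  calc ‖g (exp (a * z + c)) * (z - x)‖ = |g (exp (a * z + c))| * |z - x| := by
        rw [norm_mul, Real.norm_eq_abs, Real.norm_eq_abs]
    _ ≤ C * (exp (a * z + c) ^ p + exp (a * z + c) ^ q) * |z - x| :=
        mul_le_mul_of_nonneg_right (hg _ (exp_pos _)) (abs_nonneg _)
    _ = _ := by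
        simp only [hrpow, norm_mul, Real.norm_eq_abs, abs_of_pos (exp_pos _)]
        ring

end GaussianIntegrals

lemma stdNormalPDF_eq (z : ℝ) : stdNormalPDF z = (√(2 * π))⁻¹ * exp (-z ^ 2 / 2) := by
  simp [stdNormalPDF, gaussianPDFReal]

lemma stdNormalPDF_pos (z : ℝ) : 0 < stdNormalPDF z :=
  gaussianPDFReal_pos _ _ _ one_ne_zero

lemma hasDerivAt_stdNormalPDF (z : ℝ) : HasDerivAt stdNormalPDF (-z * stdNormalPDF z) z := by
  have h := ((hasDerivAt_pow 2 z).fun_neg.div_const 2).exp.const_mul (√(2 * π))⁻¹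
  simp only [funext stdNormalPDF_eq]
  refine h.congr_deriv ?_
  norm_num
  ring

lemma setIntegral_Iio_exp_mul_mul_sub_gaussianReal (a c b : ℝ) :
    ∫ z in Iio b, exp (a * z + c) * (z - a) ∂gaussianReal 0 1
      = -(exp (a * b + c) * stdNormalPDF b) := by
  set F : ℝ → ℝ := fun z ↦ exp (a * z + c) * stdNormalPDF z
  have hF : ∀ z, HasDerivAt (fun z ↦ -F z)
      (gaussianPDFReal 0 1 z • (exp (a * z + c) * (z - a))) z := fun z ↦ by
    have h := ((((hasDerivAt_id' z).const_mul a).add_const c).exp.fun_mul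
      (hasDerivAt_stdNormalPDF z)).fun_neg
    refine h.congr_deriv ?_
    simp only [stdNormalPDF, smul_eq_mul]
    ring
  have hexp : Integrable (fun z ↦ exp (a * z + c)) (gaussianReal 0 1) :=
    ((integrable_exp_mul_gaussianReal a).const_mul (exp c)).congr
      (ae_of_all _ fun z ↦ by simp only [exp_add]; ring)
  have hFint : Integrable F := by
    refine ((integrable_gaussianReal_iff one_ne_zero).1 hexp).congr (ae_of_all _ fun z ↦ ?_)
    simp [F, stdNormalPDF, mul_comm]
  have hF'int : Integrable fun z ↦ gaussianPDFReal 0 1 z • (exp (a * z + c) * (z - a)) :=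
    (integrable_gaussianReal_iff one_ne_zero).1 (integrable_exp_mul_add_mul_sub_gaussianReal a c a)
  have hlim := tendsto_zero_of_hasDerivAt_of_integrableOn_Iic (a := b) (fun z _ ↦ hF z)
    hF'int.integrableOn hFint.neg.integrableOn
  rw [setIntegral_gaussianReal_eq_setIntegral_smul one_ne_zero _ measurableSet_Iio,
    ← integral_Iic_eq_integral_Iio,
    integral_Iic_of_hasDerivAt_of_tendsto' (fun z _ ↦ hF z) hF'int.integrableOn hlim, sub_zero]

theorem truncated_stein_inequality_general
    (U U' : ℝ → ℝ)
    (hderiv : ∀ w : ℝ, 0 < w → HasDerivAt U (U' w) w)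
    (hconc : ConcaveOn ℝ (Set.Ioi 0) U)
    (hU'pos : ∀ w : ℝ, 0 < w → 0 < U' w)
    (hgrowth : ∃ C ν : ℝ, 0 < C ∧ 0 < ν ∧
      ∀ w : ℝ, 0 < w → U' w ≤ C * (w ^ ν + w ^ (-ν)))
    (x y H : ℝ) (hx : 0 < x) :
    (∫ z in Set.Iio (H / x),
        U' (Real.exp (x * z + y - x ^ 2 / 2)) * Real.exp (x * z + y - x ^ 2 / 2)
          * (z - x) ∂(gaussianReal 0 1))
      ≤ -(U' (Real.exp (H + y - x ^ 2 / 2)) * Real.exp (H + y - x ^ 2 / 2)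
          * stdNormalPDF (H / x)) ∧
    -(U' (Real.exp (H + y - x ^ 2 / 2)) * Real.exp (H + y - x ^ 2 / 2)
        * stdNormalPDF (H / x)) < 0 := by
  obtain ⟨C, ν, -, -, hU'growth⟩ := hgrowth
  simp only [add_sub_assoc, mul_assoc]
  set c := y - x ^ 2 / 2
  set ψ : ℝ → ℝ := fun z ↦ U' (exp (x * z + c))
  have hψ : Antitone ψ := fun z₁ z₂ h ↦ hconc.antitoneOn_of_hasDerivAt hderiv (exp_pos _)
    (exp_pos _) (exp_le_exp.2 (by nlinarith))
  have hbound : ∀ w, 0 < w → |U' w * w| ≤ C * (w ^ (ν + 1) + w ^ (-ν + 1)) := by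
    intro w hw
    rw [abs_of_pos (mul_pos (hU'pos w hw) hw), rpow_add_one hw.ne', rpow_add_one hw.ne',
      ← add_mul, ← mul_assoc]
    exact mul_le_mul_of_nonneg_right (hU'growth w hw) hw.le
  have hint : Integrable (fun z ↦ ψ z * (exp (x * z + c) * (z - x))) (gaussianReal 0 1) := by
    simpa only [mul_assoc] using integrable_comp_exp_mul_sub_gaussianReal hbound
      (hψ.measurable.mul (by fun_prop)).aestronglyMeasurable x
  have hmain := setIntegral_Iio_mul_le_of_antitone hψ (x := x) (b := H / x)
    (fun z hz ↦ mul_nonpos_of_nonneg_of_nonpos (exp_pos _).le (by linarith))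
    (fun z hz ↦ mul_nonneg (exp_pos _).le (by linarith)) hint.integrableOn
    (integrable_exp_mul_add_mul_sub_gaussianReal x c x).integrableOn
  rw [setIntegral_Iio_exp_mul_mul_sub_gaussianReal, mul_div_cancel₀ _ hx.ne'] at hmain
  have hpos : 0 < U' (exp (H + c)) * (exp (H + c) * stdNormalPDF (H / x)) :=
    mul_pos (hU'pos _ (exp_pos _)) (mul_pos (exp_pos _) (stdNormalPDF_pos _))
  refine ⟨hmain.trans ?_, neg_lt_zero.2 hpos⟩
  have hψb : ψ (H / x) = U' (exp (H + c)) := by simp only [ψ, mul_div_cancel₀ _ hx.ne']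
  rw [← hψb, mul_neg, neg_le_neg_iff]
  exact mul_le_mul_of_nonneg_right (hψ (min_le_right _ _))
    (mul_pos (exp_pos _) (stdNormalPDF_pos _)).le

/-- Key Stein-type truncated inequality showing that the cumulative-risk partial
derivative of the GDA value is negative. -/
theorem truncated_stein_inequality
    (U U' : ℝ → ℝ)
    (hderiv : ∀ w : ℝ, 0 < w → HasDerivAt U (U' w) w)
    (hU'cont : ContinuousOn U' (Set.Ioi 0))
    (hconc : ConcaveOn ℝ (Set.Ioi 0) U)
    (hU'pos : ∀ w : ℝ, 0 < w → 0 < U' w)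
    (hgrowth : ∃ C ν : ℝ, 0 < C ∧ 0 < ν ∧
      ∀ w : ℝ, 0 < w → U' w ≤ C * (w ^ ν + w ^ (-ν)))
    (x y H : ℝ) (hx : 0 < x) :
    (∫ z in Set.Iio (H / x),
        U' (Real.exp (x * z + y - x ^ 2 / 2)) * Real.exp (x * z + y - x ^ 2 / 2)
          * (z - x) ∂(gaussianReal 0 1))
      ≤ -(U' (Real.exp (H + y - x ^ 2 / 2)) * Real.exp (H + y - x ^ 2 / 2)
          * stdNormalPDF (H / x)) ∧
    -(U' (Real.exp (H + y - x ^ 2 / 2)) * Real.exp (H + y - x ^ 2 / 2)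
        * stdNormalPDF (H / x)) < 0 :=
  truncated_stein_inequality_general U U' hderiv hconc hU'pos hgrowth x y H hx
end
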